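/- Let L, H > 0, T > 0, ρ > 0, let Ξ = [0, L] × [0, H], let b : Ξ → ℝ be continuous, and let u : [0, T] × Ξ → ℝ be continuous. Let x : [0, T] × Ξ → ℝ be such that x, ∂x/∂t, and the second spatial partial derivatives of x are continuous, x satisfies ∂x/∂t(t, ξ) = −ρ x(t, ξ) + Δ_ξ x(t, ξ) + b(ξ)u(t, ξ) on [0, T] × Ξ, and x(t, ·) satisfies the Neumann boundary conditions ∂x/∂ξ₁(t, 0, ξ₂) = ∂x/∂ξ₁(t, L, ξ₂) = 0 and ∂x/∂ξ₂(t, ξ₁, 0) = ∂x/∂ξ₂(t, ξ₁, H) = 0. Then the total goodwill x̄(t) := ∫_Ξ x(t, ξ) dξ is differentiable on [0, T] and satisfies the Nerlove–Arrow equation x̄'(t) = −ρ x̄(t) + ū(t), where ū(t) := ∫_Ξ b(ξ)u(t, ξ) dξ. -/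

import Mathlib

open MeasureTheory

/-- First partial derivative in the first coordinate of `v : ℝ² → ℝ`. -/
noncomputable def pderiv1 (v : ℝ × ℝ → ℝ) (ξ : ℝ × ℝ) : ℝ :=
  fderiv ℝ v ξ (1, 0)

/-- First partial derivative in the second coordinate of `v : ℝ² → ℝ`. -/
noncomputable def pderiv2 (v : ℝ × ℝ → ℝ) (ξ : ℝ × ℝ) : ℝ :=
  fderiv ℝ v ξ (0, 1)

/-- The Laplacian `Δv = ∂²v/∂ξ₁² + ∂²v/∂ξ₂²` of `v : ℝ² → ℝ`. -/
noncomputable def laplacian2 (v : ℝ × ℝ → ℝ) (ξ : ℝ × ℝ) : ℝ :=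
  pderiv1 (pderiv1 v) ξ + pderiv2 (pderiv2 v) ξ

/-!
Integrating the PDE over `Ξ`, the diffusion term drops out: by the divergence theorem on the
rectangle, `∫_Ξ Δx` is the flux of `∇x` through `∂Ξ`, which vanishes under the Neumann
conditions. What remains is to differentiate `t ↦ ∫_Ξ x(t, ·)` under the integral sign up to the
endpoints of `[0, T]`: integrating `∂ₜx` in time at each `ξ`, swapping the two integrals by Fubini,
and applying the fundamental theorem of calculus to the continuous function `t ↦ ∫_Ξ ∂ₜx(t, ·)`.
-/

open Set Function

theorem ContDiffOn.fderiv_apply_of_isOpen {𝕜 E F : Type*} [NontriviallyNormedField 𝕜]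
    [NormedAddCommGroup E] [NormedSpace 𝕜 E] [NormedAddCommGroup F] [NormedSpace 𝕜 F]
    {f : E → F} {s : Set E} {m n : WithTop ℕ∞} (hf : ContDiffOn 𝕜 n f s) (hs : IsOpen s)
    (hmn : m + 1 ≤ n) (y : E) : ContDiffOn 𝕜 m (fun x => fderiv 𝕜 f x y) s :=
  (hf.fderiv_of_isOpen hs hmn).clm_apply contDiffOn_const

theorem setIntegral_laplacian2_eq_zero {v : ℝ × ℝ → ℝ} {U : Set (ℝ × ℝ)} (hU : IsOpen U)
    (hv : ContDiffOn ℝ 2 v U) {a b : ℝ × ℝ} (hab : a ≤ b) (hUab : Icc a b ⊆ U)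
    (hN1 : ∀ y ∈ Icc a.2 b.2, pderiv1 v (a.1, y) = 0 ∧ pderiv1 v (b.1, y) = 0)
    (hN2 : ∀ x ∈ Icc a.1 b.1, pderiv2 v (x, a.2) = 0 ∧ pderiv2 v (x, b.2) = 0) :
    ∫ ξ in Icc a b, laplacian2 v ξ = 0 := by
  have hv1 : ContDiffOn ℝ 1 (pderiv1 v) U := hv.fderiv_apply_of_isOpen hU (by norm_num) _
  have hv2 : ContDiffOn ℝ 1 (pderiv2 v) U := hv.fderiv_apply_of_isOpen hU (by norm_num) _
  have hΔ : ContinuousOn (laplacian2 v) U :=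
    ((hv1.fderiv_apply_of_isOpen (m := 0) hU (by norm_num) _).add
      (hv2.fderiv_apply_of_isOpen (m := 0) hU (by norm_num) _)).continuousOn
  have hdiff {w : ℝ × ℝ → ℝ} (hw : ContDiffOn ℝ 1 w U) :
      ∀ ξ ∈ Ioo a.1 b.1 ×ˢ Ioo a.2 b.2, HasFDerivAt w (fderiv ℝ w ξ) ξ := fun ξ hξ =>
    ((hw.differentiableOn one_ne_zero).differentiableAt (hU.mem_nhds (hUab (by
      rw [Icc_prod_eq]; exact prod_mono Ioo_subset_Icc_self Ioo_subset_Icc_self hξ)))).hasFDerivAt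
  have hzero {f : ℝ → ℝ} {c d : ℝ} (hcd : c ≤ d) (hf : ∀ y ∈ Icc c d, f y = 0) :
      ∫ y in c..d, f y = 0 := by
    rw [intervalIntegral.integral_congr (g := 0) (by rwa [uIcc_of_le hcd])]
    simp
  change ∫ ξ in Icc a b, fderiv ℝ (pderiv1 v) ξ (1, 0) + fderiv ℝ (pderiv2 v) ξ (0, 1) = 0
  rw [integral_divergence_prod_Icc_of_hasFDerivAt_of_le (pderiv1 v) (pderiv2 v) _ _ a b hab
      (hv1.continuousOn.mono hUab) (hv2.continuousOn.mono hUab) (hdiff hv1) (hdiff hv2)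
      ((hΔ.mono hUab).integrableOn_compact isCompact_Icc),
    hzero hab.1 fun x hx => (hN2 x hx).1, hzero hab.1 fun x hx => (hN2 x hx).2,
    hzero hab.2 fun y hy => (hN1 y hy).1, hzero hab.2 fun y hy => (hN1 y hy).2]
  simp

section ParametricIntegral

variable {X E : Type*} [TopologicalSpace X] [T2Space X] [SecondCountableTopology X]
  [MeasurableSpace X] [OpensMeasurableSpace X] {μ : Measure X} [IsFiniteMeasureOnCompacts μ]
  [NormedAddCommGroup E] [NormedSpace ℝ E]

theorem continuousOn_setIntegral_of_continuousOn_prod {g : ℝ → X → E} {a b : ℝ} {K : Set X}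
    (hK : IsCompact K) (hg : ContinuousOn (uncurry g) (Icc a b ×ˢ K)) :
    ContinuousOn (fun t => ∫ ξ in K, g t ξ ∂μ) (Icc a b) := by
  have hKm : MeasurableSet K := hK.measurableSet
  obtain ⟨C, hC⟩ := (isCompact_Icc.prod hK).exists_bound_of_continuousOn hg
  refine continuousOn_of_dominated (bound := fun _ => C) (fun t ht => ?_) (fun t ht => ?_)
    (integrableOn_const hK.measure_lt_top.ne) ?_
  · exact (hg.uncurry_left t ht).aestronglyMeasurable hKm
  · exact (ae_restrict_iff' hKm).2 (ae_of_all _ fun ξ hξ => hC (t, ξ) ⟨ht, hξ⟩)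
  · exact (ae_restrict_iff' hKm).2 (ae_of_all _ fun ξ hξ => hg.uncurry_right ξ hξ)

variable [SFinite μ] [CompleteSpace E]

theorem setIntegral_sub_eq_intervalIntegral_of_hasDerivWithinAt {F g : ℝ → X → E} {a b : ℝ}
    {K : Set X} (hK : IsCompact K) (hF : ∀ t ∈ Icc a b, IntegrableOn (F t) K μ)
    (hg : ContinuousOn (uncurry g) (Icc a b ×ˢ K))
    (hFg : ∀ t ∈ Icc a b, ∀ ξ ∈ K, HasDerivWithinAt (F · ξ) (g t ξ) (Icc a b) t)
    {s : ℝ} (hs : s ∈ Icc a b) :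
    ∫ ξ in K, F s ξ ∂μ - ∫ ξ in K, F a ξ ∂μ = ∫ r in a..s, ∫ ξ in K, g r ξ ∂μ := by
  have hsub : Icc a s ⊆ Icc a b := Icc_subset_Icc_right hs.2
  have hftc : ∀ ξ ∈ K, F s ξ - F a ξ = ∫ r in a..s, g r ξ := fun ξ hξ =>
    (intervalIntegral.integral_eq_sub_of_hasDeriv_right_of_le hs.1
      (fun r hr => (hFg r (hsub hr) ξ hξ).continuousWithinAt.mono hsub)
      (fun r hr => (hFg r (hsub (Ioo_subset_Icc_self hr)) ξ hξ).mono_of_mem_nhdsWithin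
        (Icc_mem_nhdsGT_of_mem ⟨hr.1.le, hr.2.trans_le hs.2⟩))
      ((hg.uncurry_right ξ hξ).mono hsub |>.intervalIntegrable_of_Icc hs.1)).symm
  have hint : Integrable (uncurry g) ((volume.restrict (uIoc a s)).prod (μ.restrict K)) := by
    rw [uIoc_of_le hs.1, Measure.prod_restrict]
    exact ((hg.mono (prod_mono hsub subset_rfl)).integrableOn_compact
      (isCompact_Icc.prod hK)).mono_set (prod_mono Ioc_subset_Icc_self subset_rfl)
  rw [← integral_sub (hF s hs) (hF a ⟨le_rfl, hs.1.trans hs.2⟩),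
    setIntegral_congr_fun hK.measurableSet hftc, intervalIntegral_integral_swap hint]

theorem hasDerivWithinAt_setIntegral_of_hasDerivWithinAt {F g : ℝ → X → E} {a b : ℝ}
    {K : Set X} (hK : IsCompact K) (hF : ∀ t ∈ Icc a b, IntegrableOn (F t) K μ)
    (hg : ContinuousOn (uncurry g) (Icc a b ×ˢ K))
    (hFg : ∀ t ∈ Icc a b, ∀ ξ ∈ K, HasDerivWithinAt (F · ξ) (g t ξ) (Icc a b) t)
    {t : ℝ} (ht : t ∈ Icc a b) :
    HasDerivWithinAt (fun s => ∫ ξ in K, F s ξ ∂μ) (∫ ξ in K, g t ξ ∂μ) (Icc a b) t := by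
  have hG := continuousOn_setIntegral_of_continuousOn_prod (μ := μ) hK hg
  have : Fact (t ∈ Icc a b) := ⟨ht⟩
  have hprim := (intervalIntegral.integral_hasDerivWithinAt_right (s := Icc a b) (t := Icc a b)
    ((hG.mono (Icc_subset_Icc_right ht.2)).intervalIntegrable_of_Icc ht.1)
    ⟨Icc a b, self_mem_nhdsWithin, hG.aestronglyMeasurable measurableSet_Icc⟩
    (hG t ht)).const_add (∫ ξ in K, F a ξ ∂μ)
  refine hprim.congr (fun s hs => ?_) ?_ <;>
    rw [← setIntegral_sub_eq_intervalIntegral_of_hasDerivWithinAt hK hF hg hFg ‹_›, add_sub_cancel]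

end ParametricIntegral

theorem stmt6_general (L H T ρ : ℝ) (hL : 0 < L) (hH : 0 < H)
    (b : ℝ × ℝ → ℝ) (u : ℝ → ℝ × ℝ → ℝ) (x : ℝ → ℝ × ℝ → ℝ)
    (Ξ : Set (ℝ × ℝ)) (hΞ : Ξ = Set.Icc ((0 : ℝ), (0 : ℝ)) (L, H))
    (hb : ContinuousOn b Ξ)
    (hu : ContinuousOn (fun p : ℝ × (ℝ × ℝ) => u p.1 p.2) (Set.Icc 0 T ×ˢ Ξ))
    -- x is continuous on [0,T] × Ξ
    (hxcont : ContinuousOn (fun p : ℝ × (ℝ × ℝ) => x p.1 p.2) (Set.Icc 0 T ×ˢ Ξ))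
    -- the second spatial partial derivatives of x exist near Ξ and are continuous
    (U : Set (ℝ × ℝ)) (hU : IsOpen U) (hUΞ : Ξ ⊆ U)
    (hxspace : ∀ t ∈ Set.Icc (0 : ℝ) T, ContDiffOn ℝ 2 (x t) U)
    (hx2cont : ContinuousOn (fun p : ℝ × (ℝ × ℝ) => laplacian2 (x p.1) p.2)
      (Set.Icc 0 T ×ˢ Ξ))
    -- ∂x/∂t exists, is continuous, and satisfies the PDE on [0,T] × Ξ
    (hpde : ∀ t ∈ Set.Icc (0 : ℝ) T, ∀ ξ ∈ Ξ,
      HasDerivWithinAt (fun s => x s ξ)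
        (-ρ * x t ξ + laplacian2 (x t) ξ + b ξ * u t ξ) (Set.Icc 0 T) t)
    -- Neumann boundary conditions
    (hN1 : ∀ t ∈ Set.Icc (0 : ℝ) T, ∀ ξ₂ ∈ Set.Icc (0 : ℝ) H,
      pderiv1 (x t) (0, ξ₂) = 0 ∧ pderiv1 (x t) (L, ξ₂) = 0)
    (hN2 : ∀ t ∈ Set.Icc (0 : ℝ) T, ∀ ξ₁ ∈ Set.Icc (0 : ℝ) L,
      pderiv2 (x t) (ξ₁, 0) = 0 ∧ pderiv2 (x t) (ξ₁, H) = 0) :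
    ∀ t ∈ Set.Icc (0 : ℝ) T,
      HasDerivWithinAt (fun s => ∫ ξ in Ξ, x s ξ)
        (-ρ * (∫ ξ in Ξ, x t ξ) + ∫ ξ in Ξ, b ξ * u t ξ) (Set.Icc 0 T) t := by
  subst hΞ
  intro t ht
  have hslice {f : ℝ → ℝ × ℝ → ℝ} (hf : ContinuousOn (uncurry f) (Icc 0 T ×ˢ Icc (0, 0) (L, H)))
      {s : ℝ} (hs : s ∈ Icc 0 T) : IntegrableOn (f s) (Icc (0, 0) (L, H)) :=
    (hf.uncurry_left s hs).integrableOn_compact isCompact_Icc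
  have hbu : ContinuousOn (uncurry fun s ξ => b ξ * u s ξ) (Icc 0 T ×ˢ Icc (0, 0) (L, H)) :=
    (hb.comp continuousOn_snd fun _ hp => hp.2).mul hu
  have hrhs : ContinuousOn (uncurry fun s ξ => -ρ * x s ξ + laplacian2 (x s) ξ + b ξ * u s ξ)
      (Icc 0 T ×ˢ Icc (0, 0) (L, H)) :=
    ((continuousOn_const.mul hxcont).add hx2cont).add hbu
  have hρx := (hslice hxcont ht).const_mul (-ρ)
  have hΔx := hslice (f := fun s => laplacian2 (x s)) hx2cont ht
  refine (hasDerivWithinAt_setIntegral_of_hasDerivWithinAt isCompact_Icc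
    (fun s hs => hslice hxcont hs) hrhs hpde ht).congr_deriv ?_
  rw [integral_add (f := fun ξ => -ρ * x t ξ + laplacian2 (x t) ξ) (hρx.add hΔx) (hslice hbu ht),
    integral_add hρx hΔx, integral_const_mul,
    setIntegral_laplacian2_eq_zero hU (hxspace t ht) ⟨hL.le, hH.le⟩ hUΞ (hN1 t ht) (hN2 t ht),
    add_zero]

/-- spatial averaging of the distributed goodwill dynamics
`∂x/∂t = −ρx + Δ_ξ x + b·u` on the rectangle `Ξ = [0, L] × [0, H]` with Neumann
boundary conditions recovers the classical Nerlove–Arrow equation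
`x̄'(t) = −ρ x̄(t) + ū(t)` for the total goodwill `x̄(t) = ∫_Ξ x(t, ξ) dξ`,
with `ū(t) = ∫_Ξ b(ξ) u(t, ξ) dξ`. -/
theorem stmt6 (L H T ρ : ℝ) (hL : 0 < L) (hH : 0 < H) (hT : 0 < T) (hρ : 0 < ρ)
    (b : ℝ × ℝ → ℝ) (u : ℝ → ℝ × ℝ → ℝ) (x : ℝ → ℝ × ℝ → ℝ)
    (Ξ : Set (ℝ × ℝ)) (hΞ : Ξ = Set.Icc ((0 : ℝ), (0 : ℝ)) (L, H))
    (hb : ContinuousOn b Ξ)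
    (hu : ContinuousOn (fun p : ℝ × (ℝ × ℝ) => u p.1 p.2) (Set.Icc 0 T ×ˢ Ξ))
    -- x is continuous on [0,T] × Ξ
    (hxcont : ContinuousOn (fun p : ℝ × (ℝ × ℝ) => x p.1 p.2) (Set.Icc 0 T ×ˢ Ξ))
    -- the second spatial partial derivatives of x exist near Ξ and are continuous
    (U : Set (ℝ × ℝ)) (hU : IsOpen U) (hUΞ : Ξ ⊆ U)
    (hxspace : ∀ t ∈ Set.Icc (0 : ℝ) T, ContDiffOn ℝ 2 (x t) U)
    (hx2cont : ContinuousOn (fun p : ℝ × (ℝ × ℝ) => laplacian2 (x p.1) p.2)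
      (Set.Icc 0 T ×ˢ Ξ))
    -- ∂x/∂t exists, is continuous, and satisfies the PDE on [0,T] × Ξ
    (hpde : ∀ t ∈ Set.Icc (0 : ℝ) T, ∀ ξ ∈ Ξ,
      HasDerivWithinAt (fun s => x s ξ)
        (-ρ * x t ξ + laplacian2 (x t) ξ + b ξ * u t ξ) (Set.Icc 0 T) t)
    -- Neumann boundary conditions
    (hN1 : ∀ t ∈ Set.Icc (0 : ℝ) T, ∀ ξ₂ ∈ Set.Icc (0 : ℝ) H,
      pderiv1 (x t) (0, ξ₂) = 0 ∧ pderiv1 (x t) (L, ξ₂) = 0)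
    (hN2 : ∀ t ∈ Set.Icc (0 : ℝ) T, ∀ ξ₁ ∈ Set.Icc (0 : ℝ) L,
      pderiv2 (x t) (ξ₁, 0) = 0 ∧ pderiv2 (x t) (ξ₁, H) = 0) :
    ∀ t ∈ Set.Icc (0 : ℝ) T,
      HasDerivWithinAt (fun s => ∫ ξ in Ξ, x s ξ)
        (-ρ * (∫ ξ in Ξ, x t ξ) + ∫ ξ in Ξ, b ξ * u t ξ) (Set.Icc 0 T) t :=
  stmt6_general L H T ρ hL hH b u x Ξ hΞ hb hu hxcont U hU hUΞ hxspace hx2cont hpde hN1 hN2
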